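/- arXiv:1905.07342 — 5 statements merged into one kernel-verified Lean document; each statement's English description precedes it below -/
import Mathlib

section
/- For all p₁, p₂ in (0,1), the Kullback-Leibler divergence between Bernoulli distributions satisfies kl(p₁,p₂) ≤ (p₁-p₂)²/min(p₁(1-p₁), p₂(1-p₂)). -/
/-! Bounding each logarithm by `log x ≤ x - 1` dominates `kl(p, q)` by the χ²-divergence
`(p - q)² / (q (1 - q))`; shrinking the denominator to the minimum only enlarges it. -/

open Real

/-- Bernoulli Kullback-Leibler divergence. -/
noncomputable def klBern (p q : ℝ) : ℝ :=
  p * Real.log (p / q) + (1 - p) * Real.log ((1 - p) / (1 - q))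

lemma mul_log_div_le_mul_div_sub_one {p q : ℝ} (hp : 0 ≤ p) (hq : 0 < q) :
    p * log (p / q) ≤ p * (p / q - 1) := by
  rcases hp.eq_or_lt with rfl | hp
  · simp
  · exact mul_le_mul_of_nonneg_left (log_le_sub_one_of_pos (by positivity)) hp.le

lemma klBern_le_sq_div {p q : ℝ} (hp : p ∈ Set.Icc (0:ℝ) 1) (hq : q ∈ Set.Ioo (0:ℝ) 1) :
    klBern p q ≤ (p - q) ^ 2 / (q * (1 - q)) := by
  obtain ⟨hp0, hp1⟩ := hp
  obtain ⟨hq0, hq1⟩ := hq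
  have hq1' : 0 < 1 - q := by linarith
  calc klBern p q ≤ p * (p / q - 1) + (1 - p) * ((1 - p) / (1 - q) - 1) :=
        add_le_add (mul_log_div_le_mul_div_sub_one hp0 hq0)
          (mul_log_div_le_mul_div_sub_one (by linarith) hq1')
    _ = (p - q) ^ 2 / (q * (1 - q)) := by field_simp; ring

theorem kl_le_sq_div_min (p₁ p₂ : ℝ) (h₁ : p₁ ∈ Set.Ioo (0:ℝ) 1)
    (h₂ : p₂ ∈ Set.Ioo (0:ℝ) 1) :
    klBern p₁ p₂ ≤ (p₁ - p₂) ^ 2 / min (p₁ * (1 - p₁)) (p₂ * (1 - p₂)) := by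
  obtain ⟨hp0, hp1⟩ := h₁
  obtain ⟨hq0, hq1⟩ := h₂
  have hmin : 0 < min (p₁ * (1 - p₁)) (p₂ * (1 - p₂)) :=
    lt_min (mul_pos hp0 (by linarith)) (mul_pos hq0 (by linarith))
  calc klBern p₁ p₂ ≤ (p₁ - p₂) ^ 2 / (p₂ * (1 - p₂)) :=
        klBern_le_sq_div ⟨hp0.le, hp1.le⟩ ⟨hq0, hq1⟩
    _ ≤ (p₁ - p₂) ^ 2 / min (p₁ * (1 - p₁)) (p₂ * (1 - p₂)) :=
        div_le_div_of_nonneg_left (sq_nonneg _) hmin (min_le_right _ _)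
end

section
/- For any real p ∈ (0,1) and any real α with 5 ≤ α ≤ 1/p, one has kl(αp, p) ≥ (αp/2)·log α, where kl is the Bernoulli Kullback-Leibler divergence. -/
/-!
With `c = αp`, the second term of `kl(c, p)` is at least `p - c` (from `log x ≥ 1 - 1/x`), so
`kl(c, p) ≥ c log α - c (1 - 1/α)`. It then suffices that `log α ≥ 2 - 2/α`, which follows from
`log 5 > 1.6` and the tangent-line bound `log (5/α) ≤ 5/α - 1`.
-/

open Real

lemma sub_le_mul_log_div {x y : ℝ} (hx : 0 ≤ x) (hy : 0 < y) : x - y ≤ x * log (x / y) := by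
  rcases hx.eq_or_lt with rfl | hx
  · simpa using hy.le
  calc x - y = x * (1 - (x / y)⁻¹) := by field_simp
    _ ≤ x * log (x / y) := by gcongr; exact one_sub_inv_le_log_of_pos (by positivity)

lemma two_sub_two_div_le_log {α : ℝ} (hα : 5 ≤ α) : 2 - 2 / α ≤ log α := by
  have hα0 : 0 < α := by linarith
  have htangent : log 5 - log α ≤ 5 / α - 1 := by
    rw [← log_div (by norm_num) hα0.ne']
    exact log_le_sub_one_of_pos (by positivity)
  have h3 : 3 / α ≤ 3 / 5 := by gcongr
  have h5 : 5 / α = 2 / α + 3 / α := by ring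
  linarith [log_five_gt_d9]

lemma mul_log_div_add_sub_le_klBern {c p : ℝ} (hc1 : c ≤ 1) (hp1 : p < 1) :
    c * log (c / p) + (p - c) ≤ klBern c p := by
  have h := sub_le_mul_log_div (x := 1 - c) (y := 1 - p) (by linarith) (by linarith)
  rw [klBern]
  linarith

theorem kl_alpha_p (p α : ℝ) (hp : p ∈ Set.Ioo (0:ℝ) 1) (hα : 5 ≤ α)
    (hαp : α ≤ 1 / p) :
    α * p / 2 * Real.log α ≤ klBern (α * p) p := by
  obtain ⟨hp0, hp1⟩ := hp
  have hα0 : 0 < α := by linarith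
  have hc1 : α * p ≤ 1 := (le_div_iff₀ hp0).mp hαp
  have hkl := mul_log_div_add_sub_le_klBern hc1 hp1
  rw [mul_div_cancel_right₀ α hp0.ne'] at hkl
  have hlog : α * p / 2 * (2 - 2 / α) ≤ α * p / 2 * log α := by
    gcongr; exact two_sub_two_div_le_log hα
  have hsplit : α * p / 2 * (2 - 2 / α) = α * p - p := by field_simp
  linarith
end

section
/- Let n be an even positive integer, and consider a graph on n nodes where each node a has a degree count N_a ≥ 0 (number of pairs involving a that were sampled), with total ∑_a N_a = 2T for some T ≥ 1. Suppose moreover that N_a ≤ B for all a, where B > 0. Then for any positive real M, ∑_{a=1}^n min(N_a, M) ≥ min( max(M·√T, M·T/B), T/2 ). -/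
/-! Call a node heavy if `M < N a`, and let `k` be the number of heavy nodes; they contribute
`k * M` to the sum. A pair meets the heavy nodes at most once unless both its endpoints are heavy,
so the heavy nodes carry at most `T + k² / 2` (and at most `k * B`) of the total degree `2 * T`.
Hence either `k ≥ √T` and `k ≥ T / B`, or the light nodes carry at least `T / 2`. -/

open Finset

lemma Finset.sum_min_eq_card_mul_add_sum {ι : Type*} [Fintype ι] (f : ι → ℝ) (M : ℝ) :
    ∑ a, min (f a) M = #{a | M < f a} * M + ∑ a with ¬M < f a, f a := by
  rw [← sum_filter_add_sum_filter_not univ (fun a => M < f a), card_eq_sum_ones, Nat.cast_sum,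
    sum_mul]
  congr 1 <;> refine sum_congr rfl fun a ha => ?_
  · simp [min_eq_right (mem_filter.mp ha).2.le]
  · exact min_eq_left (not_lt.mp (mem_filter.mp ha).2)

lemma Finset.sum_card_filter_mem_eq_sum_card_inter {α : Type*} [DecidableEq α]
    (s : Finset α) (B : Finset (Finset α)) :
    ∑ a ∈ s, #{b ∈ B | a ∈ b} = ∑ t ∈ B, #(s ∩ t) := by
  simp_rw [← filter_mem_eq_inter, card_eq_sum_ones, sum_filter]
  exact sum_comm

lemma Finset.card_inter_le_one_of_card_eq_two {α : Type*} [DecidableEq α] {e L : Finset α}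
    (he : #e = 2) (heL : ¬e ⊆ L) : #(L ∩ e) ≤ 1 := by
  have hproper : L ∩ e ⊂ e := inter_subset_right.ssubset_of_ne fun h => heL (h ▸ inter_subset_left)
  have := card_lt_card hproper
  omega

lemma sum_degree_le_card_add_choose_two {α : Type*} [DecidableEq α] (P : Finset (Finset α))
    (hP : ∀ e ∈ P, #e = 2) (L : Finset α) :
    ∑ a ∈ L, #{e ∈ P | a ∈ e} ≤ #P + (#L).choose 2 := by
  have hinside : #{e ∈ P | e ⊆ L} ≤ (#L).choose 2 := by
    rw [← card_powersetCard]
    exact card_le_card fun e he => mem_powersetCard.mpr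
      ⟨(mem_filter.mp he).2, hP e (mem_filter.mp he).1⟩
  have hcross : ∑ e ∈ P with ¬e ⊆ L, #(L ∩ e) ≤ #{e ∈ P | ¬e ⊆ L} := by
    rw [card_eq_sum_ones]
    exact sum_le_sum fun e he =>
      card_inter_le_one_of_card_eq_two (hP e (mem_filter.mp he).1) (mem_filter.mp he).2
  have hinner : ∑ e ∈ P with e ⊆ L, #(L ∩ e) = #{e ∈ P | e ⊆ L} * 2 :=
    sum_const_nat fun e he => by
      rw [inter_eq_right.mpr (mem_filter.mp he).2, hP e (mem_filter.mp he).1]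
  have hsplit := card_filter_add_card_filter_not (s := P) (fun e => e ⊆ L)
  rw [sum_card_filter_mem_eq_sum_card_inter, ← sum_filter_add_sum_filter_not P (· ⊆ L)]
  omega

theorem sum_min_degree_lower_bound_general (n T : ℕ)
    (P : Finset (Finset (Fin n))) (hP : ∀ e ∈ P, e.card = 2)
    (hT : P.card = T)
    (N : Fin n → ℕ) (hN : ∀ a, N a = (P.filter (fun e => a ∈ e)).card)
    (B M : ℝ) (hB : 0 < B) (hM : 0 < M)
    (hNB : ∀ a, (N a : ℝ) ≤ B)
    (hsum : ∑ a, N a = 2 * T) :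
    min (max (M * Real.sqrt T) (M * T / B)) ((T : ℝ) / 2) ≤
      ∑ a, min (N a : ℝ) M := by
  set L : Finset (Fin n) := {a | M < N a}
  set k : ℕ := #L
  have hlight : 0 ≤ ∑ a with ¬M < N a, (N a : ℝ) := sum_nonneg fun _ _ => Nat.cast_nonneg _
  have hsplit : ∑ a ∈ L, (N a : ℝ) + ∑ a with ¬M < N a, (N a : ℝ) = 2 * T := by
    rw [sum_filter_add_sum_filter_not]; exact_mod_cast hsum
  have hheavy_le_kB : ∑ a ∈ L, (N a : ℝ) ≤ k * B := by
    simpa using sum_le_sum fun a (_ : a ∈ L) => hNB a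
  have hheavy_le_T : ∑ a ∈ L, (N a : ℝ) ≤ T + k * k / 2 := by
    have h := sum_degree_le_card_add_choose_two P hP L
    simp only [← hN, hT] at h
    have h' : (∑ a ∈ L, N a : ℝ) ≤ T + (k.choose 2 : ℝ) := by exact_mod_cast h
    rw [Nat.cast_choose_two] at h'
    nlinarith
  rw [sum_min_eq_card_mul_add_sum]
  by_cases hlarge : (T : ℝ) ≤ k * k ∧ (T : ℝ) ≤ k * B
  · refine (min_le_left _ _).trans (le_add_of_le_of_nonneg (max_le ?_ ?_) hlight)
    · have hsqrt : √(T : ℝ) ≤ k := Real.sqrt_le_iff.mpr ⟨k.cast_nonneg, by nlinarith⟩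
      nlinarith
    · rw [div_le_iff₀ hB]; nlinarith
  · refine (min_le_right _ _).trans ?_
    have : (0 : ℝ) ≤ k * M := by positivity
    rw [not_and_or, not_le, not_le] at hlarge
    rcases hlarge with h | h <;> linarith

theorem sum_min_degree_lower_bound (n T : ℕ) (hn : 0 < n) (hneven : Even n)
    (P : Finset (Finset (Fin n))) (hP : ∀ e ∈ P, e.card = 2)
    (hT : P.card = T) (hT1 : 1 ≤ T)
    (N : Fin n → ℕ) (hN : ∀ a, N a = (P.filter (fun e => a ∈ e)).card)
    (B M : ℝ) (hB : 0 < B) (hM : 0 < M)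
    (hNB : ∀ a, (N a : ℝ) ≤ B)
    (hsum : ∑ a, N a = 2 * T) :
    min (max (M * Real.sqrt T) (M * T / B)) ((T : ℝ) / 2) ≤
      ∑ a, min (N a : ℝ) M :=
  sum_min_degree_lower_bound_general n T P hP hT N hN B M hB hM hNB hsum
end

section
/- Let S₁ ∪ S₂ be a partition of nodes where S₂ = {a : N_a > M}. If ∑_{a∈S₂} N_a ≥ 3T/2 and each pair is counted in at most two nodes of S₂ and each node is in at most min(B,|S₂|) pairs with both endpoints in S₂, then |S₂| ≥ max(√T, T/B). -/
/-!
Double counting: `∑_{a ∈ S₂} N_a` counts each pair of `P` once for every endpoint it has in `S₂`,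
so it is at most `T` plus the number of pairs inside `S₂`, which is at most `|S₂|² / 2`. Hence
`3T/2 ≤ T + |S₂|²/2`, i.e. `T ≤ |S₂|²`. On the other hand `∑_{a ∈ S₂} N_a ≤ |S₂| B`, so
`T ≤ 3T/2 ≤ |S₂| B`.
-/

open Finset

namespace Finset

variable {α : Type*} [DecidableEq α]

theorem sum_card_filter_mem_eq_sum_card_inter_s9 (s : Finset α) (P : Finset (Finset α)) :
    ∑ a ∈ s, #{e ∈ P | a ∈ e} = ∑ e ∈ P, #(s ∩ e) := by
  simp_rw [← filter_mem_eq_inter, card_eq_sum_ones, sum_filter]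
  exact sum_comm

theorem card_inter_le_one_add_ite_subset {s e : Finset α} (he : #e = 2) :
    #(s ∩ e) ≤ 1 + if e ⊆ s then 1 else 0 := by
  split_ifs with hsub
  · rw [inter_eq_right.mpr hsub, he]
  · have : #(s ∩ e) < #e :=
      card_lt_card (inter_subset_right.ssubset_of_ne (mt inter_eq_right.mp hsub))
    omega

theorem card_filter_subset_le_choose_two {P : Finset (Finset α)} (hP : ∀ e ∈ P, #e = 2)
    (s : Finset α) : #{e ∈ P | e ⊆ s} ≤ (#s).choose 2 := by
  rw [← card_powersetCard]
  refine card_le_card fun e he => ?_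
  rw [mem_filter] at he
  exact mem_powersetCard.mpr ⟨he.2, hP e he.1⟩

theorem sum_card_filter_mem_le_card_add_choose_two {P : Finset (Finset α)}
    (hP : ∀ e ∈ P, #e = 2) (s : Finset α) :
    ∑ a ∈ s, #{e ∈ P | a ∈ e} ≤ #P + (#s).choose 2 :=
  calc ∑ a ∈ s, #{e ∈ P | a ∈ e}
      = ∑ e ∈ P, #(s ∩ e) := sum_card_filter_mem_eq_sum_card_inter_s9 s P
    _ ≤ ∑ e ∈ P, (1 + if e ⊆ s then 1 else 0) :=
      sum_le_sum fun e he => card_inter_le_one_add_ite_subset (hP e he)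
    _ = #P + #{e ∈ P | e ⊆ s} := by
      rw [sum_add_distrib, sum_boole, sum_const, smul_eq_mul, mul_one, Nat.cast_id]
    _ ≤ #P + (#s).choose 2 := Nat.add_le_add_left (card_filter_subset_le_choose_two hP s) _

end Finset

theorem large_degree_set_is_big_general (n T : ℕ)
    (P : Finset (Finset (Fin n))) (hP : ∀ e ∈ P, e.card = 2)
    (hT : P.card = T)
    (N : Fin n → ℕ) (hN : ∀ a, N a = (P.filter (fun e => a ∈ e)).card)
    (B : ℝ) (hB : 0 < B) (hNB : ∀ a, (N a : ℝ) ≤ B)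
    (S₂ : Finset (Fin n))
    (hbig : (3 * T / 2 : ℝ) ≤ ∑ a ∈ S₂, (N a : ℝ)) :
    max (Real.sqrt T) ((T : ℝ) / B) ≤ (S₂.card : ℝ) := by
  have hpairs : ∑ a ∈ S₂, (N a : ℝ) ≤ T + (#S₂ : ℝ) ^ 2 / 2 := by
    have hcount := sum_card_filter_mem_le_card_add_choose_two hP S₂
    simp only [← hN, hT] at hcount
    calc ∑ a ∈ S₂, (N a : ℝ) ≤ T + ((#S₂).choose 2 : ℝ) := by exact_mod_cast hcount
      _ ≤ T + (#S₂ : ℝ) ^ 2 / 2 := by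
        simpa using add_le_add_left (Nat.choose_le_pow_div (α := ℝ) 2 #S₂) (T : ℝ)
  have hdegrees : ∑ a ∈ S₂, (N a : ℝ) ≤ #S₂ * B := by
    simpa using sum_le_sum fun a (_ : a ∈ S₂) => hNB a
  have hT₀ : (0 : ℝ) ≤ T := T.cast_nonneg
  refine max_le ?_ ?_
  · exact Real.sqrt_le_iff.mpr ⟨by positivity, by linarith⟩
  · rw [div_le_iff₀ hB]
    linarith

theorem large_degree_set_is_big (n T : ℕ)
    (P : Finset (Finset (Fin n))) (hP : ∀ e ∈ P, e.card = 2)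
    (hT : P.card = T)
    (N : Fin n → ℕ) (hN : ∀ a, N a = (P.filter (fun e => a ∈ e)).card)
    (B M : ℝ) (hB : 0 < B) (hNB : ∀ a, (N a : ℝ) ≤ B)
    (hsum : ∑ a, N a = 2 * T)
    (S₂ : Finset (Fin n)) (hS₂ : S₂ = Finset.univ.filter fun a => M < (N a : ℝ))
    (hbig : (3 * T / 2 : ℝ) ≤ ∑ a ∈ S₂, (N a : ℝ)) :
    max (Real.sqrt T) ((T : ℝ) / B) ≤ (S₂.card : ℝ) :=
  large_degree_set_is_big_general n T P hP hT N hN B hB hNB S₂ hbig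
end

section
/- Let (X_x)_{x∈N} be {0,1}-valued random variables on a finite index set N of size n, whose joint distribution is exchangeable (invariant under permutations of N), and let K = ∑_x X_x. Then for any u ∈ [0,1] there exists a coupling with i.i.d. Bernoulli(u) random variables (Y_x)_{x∈N} such that M := ∑_x Y_x is independent of (X_x)_x and, on the event {M ≥ K}, one has X_x ≤ Y_x for all x ∈ N. -/
/-!
Let `a` have the exchangeable law `P` of `X`, let `b` be an independent Bernoulli vector and let
`π` be a uniform random permutation independent of both. Put `X' = a ∘ π` and `Y = b ∘ ψ ∘ π`, where
the permutation `ψ = ψ(a, b)` sends the ones of `a` onto ones of `b` whenever `a` has at most as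
many ones as `b`; this makes `X' ≤ Y` on `{∑ X' ≤ ∑ Y}`. Left multiplication by `ψ` preserves the
uniform law of `π` for each fixed `(a, b)`, so `ψ ∘ π` is again uniform and independent of `b`, and
`Y` has the law of `b` because the Bernoulli product law is exchangeable. Conditionally on `π`,
`X' = a ∘ π` has law `P` by exchangeability and `∑ Y = ∑ b` is independent of it, which gives
both the law of `X'` and the independence.
-/

open MeasureTheory ProbabilityTheory ENNReal

/-- The Bernoulli(u) distribution on ℕ (mass u at 1, mass 1-u at 0). -/
noncomputable def bernNat (u : ℝ≥0∞) : Measure ℕ :=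
  u • Measure.dirac 1 + (1 - u) • Measure.dirac 0

open Equiv Finset

instance Equiv.Perm.instMeasurableSpace {α : Type*} : MeasurableSpace (Perm α) := ⊤

instance Equiv.Perm.instDiscreteMeasurableSpace {α : Type*} :
    DiscreteMeasurableSpace (Perm α) :=
  ⟨fun _ => MeasurableSpace.measurableSet_top⟩

instance {G : Type*} [Group G] [MeasurableSpace G] [MeasurableMul G] :
    (uniformOn (Set.univ : Set G)).IsMulLeftInvariant := by
  rw [uniformOn, ProbabilityTheory.cond, Measure.restrict_univ]
  infer_instance

theorem MeasureTheory.Measure.map_prod_eq_of_forall_map_eq {α β γ : Type*} [MeasurableSpace α]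
    [MeasurableSpace β] [MeasurableSpace γ] {μ : Measure α} {ν : Measure β} [SFinite μ]
    [IsProbabilityMeasure ν] {f : α × β → γ} (hf : Measurable f) {ρ : Measure γ}
    (h : ∀ b, μ.map (fun a => f (a, b)) = ρ) : (μ.prod ν).map f = ρ := by
  ext s hs
  rw [map_apply hf hs, prod_apply_symm (hf hs)]
  have hfiber (b : β) : μ ((fun a => (a, b)) ⁻¹' (f ⁻¹' s)) = ρ s := by
    rw [← h b]
    exact (map_apply (hf.comp measurable_prodMk_right) hs).symm
  simp [hfiber]

theorem MeasureTheory.Measure.ae_forall_pi_of_ae {ι α : Type*} [Fintype ι] [MeasurableSpace α]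
    {m : Measure α} [SigmaFinite m] {p : α → Prop} (h : ∀ᵐ k ∂m, p k) :
    ∀ᵐ y ∂Measure.pi fun _ : ι => m, ∀ x, p (y x) :=
  ae_all_iff.2 fun _ => tendsto_eval_ae_ae.eventually h

open scoped Pointwise in
theorem Finset.exists_perm_forall_mem_of_card_le {α : Type*} [Fintype α] [DecidableEq α]
    {s t : Finset α} (h : #s ≤ #t) : ∃ σ : Perm α, ∀ x ∈ s, σ x ∈ t := by
  obtain ⟨s', hss', hs'⟩ := exists_superset_card_eq h (card_le_univ t)
  have := Set.powersetCard.isPretransitive (α := α) (n := #t)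
  obtain ⟨σ, hσ⟩ := MulAction.exists_smul_eq (Perm α)
    (⟨s', Set.powersetCard.mem_iff.2 hs'⟩ : Set.powersetCard α #t)
    ⟨t, Set.powersetCard.mem_iff.2 rfl⟩
  have hσt : σ • s' = t := by
    simpa only [Set.powersetCard.coe_smul] using congrArg Subtype.val hσ
  exact ⟨σ, fun x hx => hσt ▸ smul_mem_smul_finset (hss' hx)⟩

theorem exists_perm_le_comp {ι : Type*} [Fintype ι] {a b : ι → ℕ} (ha : ∀ x, a x ≤ 1)
    (hb : ∀ x, b x ≤ 1) (hab : ∑ x, a x ≤ ∑ x, b x) : ∃ σ : Perm ι, ∀ x, a x ≤ b (σ x) := by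
  classical
  have hcard {c : ι → ℕ} (hc : ∀ x, c x ≤ 1) : #{x | c x = 1} = ∑ x, c x := by
    rw [card_filter]
    exact sum_congr rfl fun x _ => by have := hc x; split_ifs <;> omega
  obtain ⟨σ, hσ⟩ := exists_perm_forall_mem_of_card_le (s := {x | a x = 1}) (t := {x | b x = 1})
    (by rwa [hcard ha, hcard hb])
  refine ⟨σ, fun x => ?_⟩
  by_cases hx : a x = 1
  · have hσx := hσ x (by simpa only [mem_filter, mem_univ, true_and] using hx)
    rw [mem_filter] at hσx
    omega
  · have := ha x
    omega

def IsExchangeable {ι α : Type*} [MeasurableSpace α] (P : Measure (ι → α)) : Prop :=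
  ∀ σ : Perm ι, P.map (fun a => a ∘ σ) = P

theorem isExchangeable_pi {ι α : Type*} [Fintype ι] [MeasurableSpace α] (m : Measure α)
    [SigmaFinite m] : IsExchangeable (Measure.pi fun _ : ι => m) := fun σ =>
  (measurePreserving_arrowCongr' (fun _ => m) (fun _ => m) σ.symm (MeasurableEquiv.refl α)
    fun _ => .id m).map_eq

theorem isProbabilityMeasure_bernNat {u : ℝ≥0∞} (hu : u ≤ 1) :
    IsProbabilityMeasure (bernNat u) :=
  ⟨by simp [bernNat, add_tsub_cancel_of_le hu]⟩

theorem ae_le_one_bernNat (u : ℝ≥0∞) : ∀ᵐ k ∂bernNat u, k ≤ 1 := by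
  simp only [bernNat, ae_add_measure_iff]
  exact ⟨Measure.ae_smul_measure (by simp [ae_dirac_eq]) u,
    Measure.ae_smul_measure (by simp [ae_dirac_eq]) (1 - u)⟩

noncomputable def dominatingPerm {ι : Type*} [Fintype ι] (a b : ι → ℕ) : Perm ι :=
  if h : (∀ x, a x ≤ 1) ∧ (∀ x, b x ≤ 1) ∧ ∑ x, a x ≤ ∑ x, b x then
    (exists_perm_le_comp h.1 h.2.1 h.2.2).choose
  else 1

theorem le_dominatingPerm_apply {ι : Type*} [Fintype ι] {a b : ι → ℕ} (ha : ∀ x, a x ≤ 1)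
    (hb : ∀ x, b x ≤ 1) (hab : ∑ x, a x ≤ ∑ x, b x) (x : ι) :
    a x ≤ b (dominatingPerm a b x) := by
  rw [dominatingPerm, dif_pos ⟨ha, hb, hab⟩]
  exact (exists_perm_le_comp ha hb hab).choose_spec x

namespace DominatingCoupling

variable {ι : Type*} (P Q : Measure (ι → ℕ))

noncomputable def measure : Measure (((ι → ℕ) × (ι → ℕ)) × Perm ι) :=
  (P.prod Q).prod (uniformOn Set.univ)

def lower (ω : ((ι → ℕ) × (ι → ℕ)) × Perm ι) : ι → ℕ :=
  ω.1.1 ∘ ω.2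

variable [Fintype ι]

instance [IsProbabilityMeasure P] [IsProbabilityMeasure Q] :
    IsProbabilityMeasure (measure P Q) := by
  unfold measure
  infer_instance

noncomputable def upper (ω : ((ι → ℕ) × (ι → ℕ)) × Perm ι) : ι → ℕ :=
  ω.1.2 ∘ (dominatingPerm ω.1.1 ω.1.2 * ω.2)

theorem sum_lower (ω : ((ι → ℕ) × (ι → ℕ)) × Perm ι) : ∑ x, lower ω x = ∑ x, ω.1.1 x :=
  Equiv.sum_comp ω.2 ω.1.1

theorem sum_upper (ω : ((ι → ℕ) × (ι → ℕ)) × Perm ι) : ∑ x, upper ω x = ∑ x, ω.1.2 x :=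
  Equiv.sum_comp (dominatingPerm ω.1.1 ω.1.2 * ω.2) ω.1.2

theorem map_lower [SFinite P] [IsProbabilityMeasure Q] (hP : IsExchangeable P) :
    (measure P Q).map lower = P :=
  Measure.map_prod_eq_of_forall_map_eq .of_discrete fun π => by
    rw [show (fun q => lower (q, π)) = (· ∘ π) ∘ Prod.fst from rfl,
      ← Measure.map_map .of_discrete measurable_fst, Measure.map_fst_prod, measure_univ,
      one_smul, hP]

theorem map_upper [IsProbabilityMeasure P] [SFinite Q] (hQ : IsExchangeable Q) :
    (measure P Q).map upper = Q := by
  have hskew : MeasurePreserving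
      (fun ω : ((ι → ℕ) × (ι → ℕ)) × Perm ι => (ω.1, dominatingPerm ω.1.1 ω.1.2 * ω.2))
      (measure P Q) (measure P Q) :=
    (MeasurePreserving.id (P.prod Q)).skew_product (g := fun q π => dominatingPerm q.1 q.2 * π)
      .of_discrete (ae_of_all _ fun _ => map_mul_left_eq_self _ _)
  rw [show upper = (fun ω : ((ι → ℕ) × (ι → ℕ)) × Perm ι => ω.1.2 ∘ ω.2) ∘
      (fun ω => (ω.1, dominatingPerm ω.1.1 ω.1.2 * ω.2)) from rfl,
    ← Measure.map_map .of_discrete hskew.measurable, hskew.map_eq]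
  refine Measure.map_prod_eq_of_forall_map_eq .of_discrete fun π => ?_
  rw [show (fun q => (q, π).1.2 ∘ (q, π).2) = (· ∘ π) ∘ Prod.snd from rfl,
    ← Measure.map_map .of_discrete measurable_snd, Measure.map_snd_prod, measure_univ, one_smul,
    hQ]

theorem indepFun_sum_upper_lower [IsProbabilityMeasure P] [IsProbabilityMeasure Q]
    (hP : IsExchangeable P) : IndepFun (fun ω => ∑ x, upper ω x) lower (measure P Q) := by
  simp_rw [sum_upper]
  have hsum : (measure P Q).map (fun ω => ∑ x, ω.1.2 x) = Q.map fun b => ∑ x, b x :=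
    Measure.map_prod_eq_of_forall_map_eq .of_discrete fun π => by
      rw [show (fun q : (ι → ℕ) × (ι → ℕ) => ∑ x, (q, π).1.2 x) = (fun b => ∑ x, b x) ∘ Prod.snd
        from rfl, ← Measure.map_map .of_discrete measurable_snd, Measure.map_snd_prod,
        measure_univ, one_smul]
  refine IndepFun.symm ((indepFun_iff_map_prod_eq_prod_map_map .of_discrete .of_discrete).2 ?_)
  rw [map_lower P Q hP, hsum]
  refine Measure.map_prod_eq_of_forall_map_eq .of_discrete fun π => ?_
  conv_rhs => rw [← hP π, Measure.map_prod_map _ _ .of_discrete .of_discrete]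
  rfl

theorem ae_lower_le_upper (hP : ∀ᵐ a ∂P, ∀ x, a x ≤ 1) (hQ : ∀ᵐ b ∂Q, ∀ x, b x ≤ 1) :
    ∀ᵐ ω ∂measure P Q, ∑ x, lower ω x ≤ ∑ x, upper ω x → ∀ x, lower ω x ≤ upper ω x := by
  have hPQ : ∀ᵐ q ∂P.prod Q, (∀ x, q.1 x ≤ 1) ∧ ∀ x, q.2 x ≤ 1 :=
    (Measure.quasiMeasurePreserving_fst.ae hP).and (Measure.quasiMeasurePreserving_snd.ae hQ)
  filter_upwards [Measure.quasiMeasurePreserving_fst.ae hPQ] with ⟨⟨a, b⟩, π⟩ ⟨ha, hb⟩ hab x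
  rw [sum_lower, sum_upper] at hab
  exact le_dominatingPerm_apply ha hb hab (π x)

end DominatingCoupling

open DominatingCoupling in
theorem coupling_exchangeable_bernoulli {ι : Type} [Fintype ι]
    {Ω : Type} [MeasurableSpace Ω] (μ : Measure Ω) [IsProbabilityMeasure μ]
    (X : ι → Ω → ℕ) (hX01 : ∀ x ω, X x ω ≤ 1)
    (hXmeas : ∀ x, Measurable (X x))
    (hexch : ∀ σ : Equiv.Perm ι,
      Measure.map (fun ω => fun x => X (σ x) ω) μ =
        Measure.map (fun ω => fun x => X x ω) μ)
    (u : ℝ≥0∞) (hu : u ≤ 1) :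
    ∃ (Ω' : Type) (_ : MeasurableSpace Ω') (ν : Measure Ω')
      (X' Y : ι → Ω' → ℕ),
      IsProbabilityMeasure ν ∧
      (∀ x, Measurable (X' x)) ∧ (∀ x, Measurable (Y x)) ∧
      Measure.map (fun ω => fun x => X' x ω) ν =
        Measure.map (fun ω => fun x => X x ω) μ ∧
      Measure.map (fun ω => fun x => Y x ω) ν =
        Measure.pi (fun _ : ι => bernNat u) ∧
      IndepFun (fun ω => ∑ x, Y x ω) (fun ω => fun x => X' x ω) ν ∧
      (∀ᵐ ω ∂ν, (∑ x, X' x ω ≤ ∑ x, Y x ω) → ∀ x, X' x ω ≤ Y x ω) := by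
  have hT : Measurable fun ω x => X x ω := measurable_pi_lambda _ hXmeas
  have := Measure.isProbabilityMeasure_map (μ := μ) hT.aemeasurable
  have := isProbabilityMeasure_bernNat hu
  have hP : IsExchangeable (μ.map fun ω x => X x ω) := fun σ => by
    rw [Measure.map_map .of_discrete hT]
    exact hexch σ
  have hP01 : ∀ᵐ a ∂μ.map (fun ω x => X x ω), ∀ x, a x ≤ 1 :=
    (ae_map_iff hT.aemeasurable .of_discrete).2 (ae_of_all _ fun ω x => hX01 x ω)
  exact ⟨_, inferInstance, measure (μ.map fun ω x => X x ω) (Measure.pi fun _ => bernNat u),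
    fun x ω => lower ω x, fun x ω => upper ω x, inferInstance, fun _ => .of_discrete,
    fun _ => .of_discrete, map_lower _ _ hP, map_upper _ _ (isExchangeable_pi _),
    indepFun_sum_upper_lower _ _ hP,
    ae_lower_le_upper _ _ hP01 (Measure.ae_forall_pi_of_ae (ae_le_one_bernNat u))⟩
end
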